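/- arXiv:2401.13844 — 3 statements merged into one kernel-verified Lean document; each statement's English description precedes it below -/
import Mathlib

section
/- Let X : ℝ → ℝ be a symmetric rearranged profile that is continuous, and assume that the two-dimensional Lebesgue measure of the set {(x,y) ∈ [-1/2,1/2] × [-1/2,1/2] : X(x) = X(y)} is zero. Then for every function u : ℝ → ℝ that is 1-periodic and even, there exists a function ũ : ℝ → ℝ such that u(x) = ũ(X(x)) for every x ∈ ℝ. -/
/-!
Evenness and 1-periodicity reduce every point `x` to `|x - round x| ∈ [0, 1/2]`. On that
interval a monotone `X` whose diagonal level set is null must be strictly monotone, since a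
flat piece `[a, b]` would put the square `[a, b]²` inside the level set. Hence `X x = X y`
forces `x` and `y` to have the same reduced point, so any even 1-periodic `u` is constant on
the fibres of `X` and factors through it.
-/

open MeasureTheory

lemma Function.Periodic.eq_abs_sub_round {f : ℝ → ℝ} (hf : Function.Periodic f 1)
    (heven : ∀ x, f (-x) = f x) (x : ℝ) : f x = f |x - round x| := by
  have hshift : f (x - round x) = f x := by simpa using hf.sub_int_mul_eq (round x)
  rcases abs_cases (x - round x) with ⟨h, _⟩ | ⟨h, _⟩
  · rw [h, hshift]
  · rw [h, heven, hshift]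

lemma strictMonoOn_of_volume_levelSet_eq_zero {X : ℝ → ℝ} {s : Set ℝ} (hs : s.OrdConnected)
    (hmono : MonotoneOn X s)
    (hnull : (volume : Measure (ℝ × ℝ)) {p | p.1 ∈ s ∧ p.2 ∈ s ∧ X p.1 = X p.2} = 0) :
    StrictMonoOn X s := by
  intro a ha b hb hab
  refine (hmono ha hb hab.le).lt_of_ne fun hXab => ?_
  have hIcc : Set.Icc a b ⊆ s := hs.out ha hb
  have hflat : ∀ x ∈ Set.Icc a b, X x = X a := fun x hx =>
    le_antisymm (hXab ▸ hmono (hIcc hx) hb hx.2) (hmono ha (hIcc hx) hx.1)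
  have hsquare : Set.Icc a b ×ˢ Set.Icc a b ⊆ {p | p.1 ∈ s ∧ p.2 ∈ s ∧ X p.1 = X p.2} :=
    fun p ⟨hp₁, hp₂⟩ => ⟨hIcc hp₁, hIcc hp₂, by rw [hflat _ hp₁, hflat _ hp₂]⟩
  have hpos : 0 < (volume : Measure (ℝ × ℝ)) (Set.Icc a b ×ˢ Set.Icc a b) := by
    rw [Measure.volume_eq_prod, Measure.prod_prod, Real.volume_Icc]
    have : 0 < ENNReal.ofReal (b - a) := ENNReal.ofReal_pos.2 (sub_pos.2 hab)
    exact ENNReal.mul_pos this.ne' this.ne'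
  exact (measure_mono hsquare).trans_lt' hpos |>.ne' hnull

lemma factorsThrough_of_strictMonoOn {X u : ℝ → ℝ} (hXper : Function.Periodic X 1)
    (hXeven : ∀ x, X (-x) = X x) (hX : StrictMonoOn X (Set.Icc 0 (1 / 2)))
    (huper : Function.Periodic u 1) (hueven : ∀ x, u (-x) = u x) :
    Function.FactorsThrough u X := by
  intro x y hxy
  have hmem : ∀ z : ℝ, |z - round z| ∈ Set.Icc (0 : ℝ) (1 / 2) :=
    fun z => ⟨abs_nonneg _, abs_sub_round z⟩
  have hreduced : |x - round x| = |y - round y| := hX.injOn (hmem x) (hmem y) <| by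
    rw [← hXper.eq_abs_sub_round hXeven, ← hXper.eq_abs_sub_round hXeven, hxy]
  rw [huper.eq_abs_sub_round hueven x, huper.eq_abs_sub_round hueven y, hreduced]

theorem stmt_1_general (X : ℝ → ℝ)
    (hper : Function.Periodic X 1)
    (heven : ∀ x : ℝ, X (-x) = X x)
    (hmono : MonotoneOn X (Set.Icc (0 : ℝ) (1/2)))
    (hnull : (volume : Measure (ℝ × ℝ))
      {p : ℝ × ℝ | p.1 ∈ Set.Icc (-(1/2) : ℝ) (1/2) ∧ p.2 ∈ Set.Icc (-(1/2) : ℝ) (1/2) ∧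
        X p.1 = X p.2} = 0) :
    ∀ u : ℝ → ℝ, Function.Periodic u 1 → (∀ x : ℝ, u (-x) = u x) →
      ∃ utilde : ℝ → ℝ, ∀ x : ℝ, u x = utilde (X x) := by
  intro u huper hueven
  have hhalf : Set.Icc (0 : ℝ) (1 / 2) ⊆ Set.Icc (-(1 / 2)) (1 / 2) :=
    Set.Icc_subset_Icc (by norm_num) le_rfl
  have hnull' : (volume : Measure (ℝ × ℝ))
      {p | p.1 ∈ Set.Icc (0 : ℝ) (1 / 2) ∧ p.2 ∈ Set.Icc (0 : ℝ) (1 / 2) ∧ X p.1 = X p.2} = 0 :=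
    measure_mono_null (fun _ ⟨h₁, h₂, h⟩ ↦ by exact ⟨hhalf h₁, hhalf h₂, h⟩) hnull
  have hsm := strictMonoOn_of_volume_levelSet_eq_zero Set.ordConnected_Icc hmono hnull'
  have hfactor := factorsThrough_of_strictMonoOn hper heven hsm huper hueven
  exact ⟨Function.extend X u 0, fun x => (hfactor.extend_apply 0 x).symm⟩

/-- If a continuous symmetric rearranged profile `X` (1-periodic, even, non-decreasing on
`[0,1/2]`) has a diagonal level set of zero two-dimensional Lebesgue measure in
`[-1/2,1/2]²`, then every 1-periodic even function `u` factorizes through `X`: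
there is `ũ` with `u = ũ ∘ X`. -/
theorem stmt_1 (X : ℝ → ℝ)
    (hper : Function.Periodic X 1)
    (heven : ∀ x : ℝ, X (-x) = X x)
    (hmono : MonotoneOn X (Set.Icc (0 : ℝ) (1/2)))
    (hcont : Continuous X)
    (hnull : (volume : Measure (ℝ × ℝ))
      {p : ℝ × ℝ | p.1 ∈ Set.Icc (-(1/2) : ℝ) (1/2) ∧ p.2 ∈ Set.Icc (-(1/2) : ℝ) (1/2) ∧
        X p.1 = X p.2} = 0) :
    ∀ u : ℝ → ℝ, Function.Periodic u 1 → (∀ x : ℝ, u (-x) = u x) →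
      ∃ utilde : ℝ → ℝ, ∀ x : ℝ, u x = utilde (X x) :=
  stmt_1_general X hper heven hmono hnull
end

section
/- For every λ ∈ (1/2, 1) there exist δ ∈ (0,1) and a constant C ≥ 0 with the following property: for every M ≥ 0, every sequence (a_k)_{k≥1} of real numbers, and every sequence (b_k)_{k≥1} of nonnegative reals such that |a_k| ≤ M and k·|a_k| ≤ b_k for all k ≥ 1, one has Σ_{k≥1} k^{2λ} a_k² ≤ C · M^{1-δ} · (Σ_{k≥1} b_k²)^{(1+δ)/2}, where the sums are taken in [0,∞]. -/
/-!
Writing `a² = |a|^(1-δ) |a|^(1+δ)` and using `|a_k| ≤ M`, `|a_k| ≤ b_k / k` bounds each term by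
`M^(1-δ) k^(2λ-1-δ) b_k^(1+δ)`. Hölder with exponents `2/(1-δ)` and `2/(1+δ)` then separates
`Σ b_k²` from a weight sum `Σ k^((2λ-1-δ)·2/(1-δ))`, which converges as soon as the exponent is
below `-1`; for `δ = (2λ+1)/3` it equals `-4`.
-/

namespace ENNReal

theorem inner_le_Lp_mul_Lq_tsum {ι : Type*} (f g : ι → ℝ≥0∞) {p q : ℝ}
    (hpq : p.HolderConjugate q) :
    ∑' i, f i * g i ≤ (∑' i, f i ^ p) ^ (1 / p) * (∑' i, g i ^ q) ^ (1 / q) := by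
  rw [ENNReal.tsum_eq_iSup_sum]
  refine iSup_le fun t => (inner_le_Lp_mul_Lq t f g hpq).trans ?_
  gcongr
  · exact hpq.one_div_nonneg
  · exact ENNReal.sum_le_tsum t
  · exact hpq.symm.one_div_nonneg
  · exact ENNReal.sum_le_tsum t

theorem tsum_mul_rpow_le {ι : Type*} (w g : ι → ℝ≥0∞) {δ : ℝ} (hδ₀ : -1 < δ) (hδ₁ : δ < 1) :
    ∑' i, w i * g i ^ (1 + δ) ≤
      (∑' i, w i ^ (2 / (1 - δ))) ^ ((1 - δ) / 2) * (∑' i, g i ^ 2) ^ ((1 + δ) / 2) := by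
  have hpq : (2 / (1 - δ)).HolderConjugate (2 / (1 + δ)) := by
    rw [Real.holderConjugate_iff]
    constructor
    · rw [lt_div_iff₀ (by linarith)]; linarith
    · rw [inv_div, inv_div]; ring
  have hg : ∀ i, (g i ^ (1 + δ)) ^ (2 / (1 + δ)) = g i ^ 2 := fun i => by
    rw [← ENNReal.rpow_mul, mul_div_cancel₀ _ (by linarith), ENNReal.rpow_two]
  simpa only [hg, one_div_div] using inner_le_Lp_mul_Lq_tsum w (fun i => g i ^ (1 + δ)) hpq

end ENNReal

theorem sq_le_rpow_mul_rpow {x y M δ : ℝ} (hxM : |x| ≤ M) (hxy : |x| ≤ y)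
    (hδ₀ : -1 ≤ δ) (hδ₁ : δ ≤ 1) : x ^ 2 ≤ M ^ (1 - δ) * y ^ (1 + δ) := by
  have hx := abs_nonneg x
  calc x ^ 2 = |x| ^ (1 - δ) * |x| ^ (1 + δ) := by
        rw [← Real.rpow_add' hx (by norm_num), sub_add_add_cancel, ← sq_abs, one_add_one_eq_two,
          Real.rpow_two]
    _ ≤ M ^ (1 - δ) * y ^ (1 + δ) := by
        have := Real.rpow_nonneg (hx.trans hxM) (1 - δ)
        gcongr
        linarith

theorem rpow_mul_sq_le {k x y M e δ : ℝ} (hk : 0 < k) (hxM : |x| ≤ M) (hkxy : k * |x| ≤ y)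
    (hδ₀ : -1 ≤ δ) (hδ₁ : δ ≤ 1) :
    k ^ e * x ^ 2 ≤ M ^ (1 - δ) * (k ^ (e - 1 - δ) * y ^ (1 + δ)) := by
  have hy : 0 ≤ y := (mul_nonneg hk.le (abs_nonneg x)).trans hkxy
  calc k ^ e * x ^ 2 ≤ k ^ e * (M ^ (1 - δ) * (y / k) ^ (1 + δ)) := by
        gcongr
        exact sq_le_rpow_mul_rpow hxM (by rwa [le_div_iff₀ hk, mul_comm]) hδ₀ hδ₁
    _ = M ^ (1 - δ) * (k ^ (e - 1 - δ) * y ^ (1 + δ)) := by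
        rw [Real.div_rpow hy hk.le, sub_sub, Real.rpow_sub hk]
        field_simp

open ENNReal in
theorem tsum_ofReal_rpow_mul_sq_le {l δ M : ℝ} (hδ₀ : -1 < δ) (hδ₁ : δ < 1) {a b : ℕ+ → ℝ}
    (hb : ∀ k, 0 ≤ b k) (ha : ∀ k, |a k| ≤ M) (hab : ∀ k : ℕ+, (k : ℝ) * |a k| ≤ b k) :
    ∑' k : ℕ+, ENNReal.ofReal ((k : ℝ) ^ (2 * l) * a k ^ 2) ≤
      ENNReal.ofReal (M ^ (1 - δ)) *
        (∑' k : ℕ+, ENNReal.ofReal ((k : ℝ) ^ (2 * l - 1 - δ)) ^ (2 / (1 - δ))) ^ ((1 - δ) / 2) *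
        (∑' k : ℕ+, ENNReal.ofReal (b k ^ 2)) ^ ((1 + δ) / 2) := by
  have hM : 0 ≤ M := (abs_nonneg _).trans (ha 1)
  calc ∑' k : ℕ+, ENNReal.ofReal ((k : ℝ) ^ (2 * l) * a k ^ 2)
      ≤ ∑' k : ℕ+, ENNReal.ofReal (M ^ (1 - δ)) *
          (ENNReal.ofReal ((k : ℝ) ^ (2 * l - 1 - δ)) * ENNReal.ofReal (b k) ^ (1 + δ)) := by
        gcongr with k
        rw [ofReal_rpow_of_nonneg (hb k) (by linarith), ← ofReal_mul (by positivity),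
          ← ofReal_mul (by positivity)]
        exact ofReal_le_ofReal (rpow_mul_sq_le (by positivity) (ha k) (hab k) hδ₀.le hδ₁.le)
    _ ≤ _ := by
        rw [ENNReal.tsum_mul_left, mul_assoc]
        gcongr
        simpa only [ofReal_pow (hb _)] using tsum_mul_rpow_le _ _ hδ₀ hδ₁

/-- For every `λ ∈ (1/2,1)` there exist `δ ∈ (0,1)` and `C ≥ 0` such that for every `M ≥ 0`
and all sequences `(a_k)_{k ≥ 1}`, `(b_k)_{k ≥ 1}` with `b_k ≥ 0`, `|a_k| ≤ M` and
`k·|a_k| ≤ b_k`, one has `Σ_{k ≥ 1} k^(2λ) a_k² ≤ C · M^(1-δ) · (Σ_{k ≥ 1} b_k²)^((1+δ)/2)`,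
the sums being taken in `[0,∞]`. -/
theorem stmt_5 (l : ℝ) (hl₁ : 1/2 < l) (hl₂ : l < 1) :
    ∃ δ : ℝ, 0 < δ ∧ δ < 1 ∧ ∃ C : ℝ, 0 ≤ C ∧
      ∀ M : ℝ, 0 ≤ M → ∀ a b : ℕ+ → ℝ,
        (∀ k : ℕ+, 0 ≤ b k) →
        (∀ k : ℕ+, |a k| ≤ M) →
        (∀ k : ℕ+, (k : ℝ) * |a k| ≤ b k) →
        (∑' k : ℕ+, ENNReal.ofReal ((k : ℝ) ^ (2 * l) * (a k) ^ 2))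
          ≤ ENNReal.ofReal C * ENNReal.ofReal (M ^ (1 - δ)) *
            (∑' k : ℕ+, ENNReal.ofReal ((b k) ^ 2)) ^ ((1 + δ) / 2) := by
  set δ : ℝ := (2 * l + 1) / 3 with hδ
  have hδ₀ : 0 < δ := by linarith
  have hδ₁ : δ < 1 := by linarith
  have hexp : (2 * l - 1 - δ) * (2 / (1 - δ)) = -4 := by
    rw [show 2 * l - 1 - δ = -2 * (1 - δ) by linarith]
    field_simp [(by linarith : 1 - δ ≠ 0)]
    ring
  have hsum : Summable fun k : ℕ+ => (k : ℝ) ^ (-4 : ℝ) :=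
    (Real.summable_nat_rpow.mpr (by norm_num)).comp_injective PNat.coe_injective
  set T := ∑' k : ℕ+, (k : ℝ) ^ (-4 : ℝ)
  have hT : 0 ≤ T := tsum_nonneg fun k => by positivity
  have hweight : ∑' k : ℕ+, ENNReal.ofReal ((k : ℝ) ^ (2 * l - 1 - δ)) ^ (2 / (1 - δ)) =
      ENNReal.ofReal T := by
    rw [ENNReal.ofReal_tsum_of_nonneg (fun k => by positivity) hsum]
    congr! 2 with k
    rw [ENNReal.ofReal_rpow_of_nonneg (by positivity) (div_nonneg zero_le_two (by linarith)),
      ← Real.rpow_mul (by positivity), hexp]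
  refine ⟨δ, hδ₀, hδ₁, T ^ ((1 - δ) / 2), by positivity, ?_⟩
  intro M _ a b hb ha hab
  rw [← ENNReal.ofReal_rpow_of_nonneg hT (by linarith), ← hweight,
    mul_comm _ (ENNReal.ofReal (M ^ _))]
  exact tsum_ofReal_rpow_mul_sq_le (by linarith) hδ₁ hb ha hab
end

section
/- Let a < b be real numbers, K ≥ 0, and let f : [a,b] → ℝ be continuous and nonnegative, satisfying f(s)² ≤ K · ∫_a^s f(r) dr for every s ∈ [a,b]. Then f(s) ≤ (K/2)·(s - a) for every s ∈ [a,b]. -/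
/-!
Put `F s = ∫_a^s f`, so that `F' = f ≤ √(K F)`. The square root of `F` need not be
differentiable where `F` vanishes, but `√(F + ε)` is, with derivative
`f / (2√(F + ε)) ≤ √K / 2`. Hence `√(F s + ε) ≤ √ε + (√K / 2)(s - a)`; letting `ε → 0`
gives `√(F s) ≤ (√K / 2)(s - a)`, and then `f s ≤ √K √(F s) ≤ (K / 2)(s - a)`.
-/

open MeasureTheory Set Filter Topology Real

lemma hasDerivAt_integral_of_continuousOn_Icc {f : ℝ → ℝ} {a b x : ℝ}
    (hf : ContinuousOn f (Icc a b)) (hx : x ∈ Ioo a b) :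
    HasDerivAt (fun s => ∫ r in a..s, f r) (f x) x :=
  intervalIntegral.integral_hasDerivAt_right
    ((hf.mono (Icc_subset_Icc le_rfl hx.2.le)).intervalIntegrable_of_Icc hx.1.le)
    ⟨Icc a b, Icc_mem_nhds hx.1 hx.2, hf.aestronglyMeasurable measurableSet_Icc⟩
    (hf.continuousAt (Icc_mem_nhds hx.1 hx.2))

section SqrtGrowth

variable {F f : ℝ → ℝ} {a b K : ℝ}

lemma sqrt_add_sub_sqrt_add_le_of_sq_le (hK : 0 ≤ K) (hF : ContinuousOn F (Icc a b))
    (hF' : ∀ x ∈ Ioo a b, HasDerivAt F (f x) x) (hF0 : ∀ x ∈ Ioo a b, 0 ≤ F x)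
    (hfF : ∀ x ∈ Ioo a b, f x ^ 2 ≤ K * F x) {ε : ℝ} (hε : 0 < ε) {s : ℝ}
    (hs : s ∈ Icc a b) :
    √(F s + ε) - √(F a + ε) ≤ √K / 2 * (s - a) := by
  have hpos : ∀ x ∈ Ioo a b, 0 < F x + ε := fun x hx => by linarith [hF0 x hx]
  have hderiv : ∀ x ∈ Ioo a b,
      HasDerivAt (fun t => √(F t + ε)) (f x / (2 * √(F x + ε))) x :=
    fun x hx => ((hF' x hx).add_const ε).sqrt (hpos x hx).ne'
  refine (convex_Icc a b).image_sub_le_mul_sub_of_deriv_le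
    (f := fun t => √(F t + ε)) (hF.add continuousOn_const).sqrt
    ?_ ?_ a (left_mem_Icc.2 (hs.1.trans hs.2)) s hs hs.1 <;> rw [interior_Icc]
  · exact fun x hx => (hderiv x hx).differentiableAt.differentiableWithinAt
  · intro x hx
    rw [(hderiv x hx).deriv, div_le_iff₀ (mul_pos two_pos (sqrt_pos.2 (hpos x hx)))]
    calc f x ≤ √(K * F x) := (le_abs_self _).trans (abs_le_sqrt (hfF x hx))
      _ ≤ √(K * (F x + ε)) := sqrt_le_sqrt (by nlinarith)
      _ = √K / 2 * (2 * √(F x + ε)) := by rw [sqrt_mul hK]; ring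

lemma sqrt_sub_sqrt_le_of_sq_le (hK : 0 ≤ K) (hF : ContinuousOn F (Icc a b))
    (hF' : ∀ x ∈ Ioo a b, HasDerivAt F (f x) x) (hF0 : ∀ x ∈ Ioo a b, 0 ≤ F x)
    (hfF : ∀ x ∈ Ioo a b, f x ^ 2 ≤ K * F x) {s : ℝ} (hs : s ∈ Icc a b) :
    √(F s) - √(F a) ≤ √K / 2 * (s - a) := by
  have hlim : ∀ t, Tendsto (fun ε => √(F t + ε)) (𝓝[>] 0) (𝓝 √(F t)) := fun t => by
    simpa using ((continuous_const.add continuous_id).sqrt.tendsto 0).mono_left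
      nhdsWithin_le_nhds
  exact le_of_tendsto ((hlim s).sub (hlim a)) (eventually_nhdsWithin_of_forall
    fun _ hε => sqrt_add_sub_sqrt_add_le_of_sq_le hK hF hF' hF0 hfF hε hs)

end SqrtGrowth

theorem stmt_9_general (a b K : ℝ) (hK : 0 ≤ K) (f : ℝ → ℝ)
    (hcont : ContinuousOn f (Set.Icc a b))
    (hpos : ∀ s ∈ Set.Icc a b, 0 ≤ f s)
    (hineq : ∀ s ∈ Set.Icc a b, (f s) ^ 2 ≤ K * ∫ r in a..s, f r) :
    ∀ s ∈ Set.Icc a b, f s ≤ (K / 2) * (s - a) := by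
  intro s hs
  set F : ℝ → ℝ := fun t => ∫ r in a..t, f r
  have hF : ContinuousOn F (Icc a b) := by
    simpa only [uIcc_of_le (hs.1.trans hs.2)] using
      intervalIntegral.continuousOn_primitive_interval (μ := volume) (a := a) (b := b)
        (by simpa only [uIcc_of_le (hs.1.trans hs.2)] using hcont.integrableOn_Icc)
  have hF0 : ∀ x ∈ Icc a b, 0 ≤ F x := fun x hx =>
    intervalIntegral.integral_nonneg hx.1 fun r hr => hpos r ⟨hr.1, hr.2.trans hx.2⟩
  have hsqrtF : √(F s) ≤ √K / 2 * (s - a) := by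
    simpa [F] using sqrt_sub_sqrt_le_of_sq_le hK hF
      (fun x hx => hasDerivAt_integral_of_continuousOn_Icc hcont hx)
      (fun x hx => hF0 x (Ioo_subset_Icc_self hx))
      (fun x hx => hineq x (Ioo_subset_Icc_self hx)) hs
  calc f s ≤ √(K * F s) := (le_abs_self _).trans (abs_le_sqrt (hineq s hs))
    _ = √K * √(F s) := sqrt_mul hK _
    _ ≤ √K * (√K / 2 * (s - a)) := mul_le_mul_of_nonneg_left hsqrtF (sqrt_nonneg K)
    _ = K / 2 * (s - a) := by rw [← mul_assoc, mul_div_assoc', mul_self_sqrt hK]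

/-- Nonlinear Gronwall-type inequality: if `f` is continuous and nonnegative on `[a,b]` and
`f(s)² ≤ K · ∫_a^s f(r) dr` for every `s ∈ [a,b]`, then `f(s) ≤ (K/2)(s-a)` on `[a,b]`. -/
theorem stmt_9 (a b K : ℝ) (hab : a < b) (hK : 0 ≤ K) (f : ℝ → ℝ)
    (hcont : ContinuousOn f (Set.Icc a b))
    (hpos : ∀ s ∈ Set.Icc a b, 0 ≤ f s)
    (hineq : ∀ s ∈ Set.Icc a b, (f s) ^ 2 ≤ K * ∫ r in a..s, f r) :
    ∀ s ∈ Set.Icc a b, f s ≤ (K / 2) * (s - a) :=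
  stmt_9_general a b K hK f hcont hpos hineq
end
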